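/- Suppose A_1,...,A_m ⊆ [n] have the (k+d)-dimensional saturation property (d ≤ n−k). Then for any B ⊆ [n] with |B| ≤ d, the sets A_1∖B,...,A_m∖B have the k-dimensional saturation property. -/

import Mathlib

/-!
Since `|B| ≤ d`, the row vectors `s ∈ F^{k+d}` with `s W` vanishing on the columns in `B` form a
space of dimension at least `k`; stacking `k` independent ones into `S` gives `W' = S W`, which is
zero on `B`. A vanishing row combination `g = (g_i)` of `𝒢_{A∖B}[S W]` pulls back to the row
combination `(g_i S)` of `𝒢_A[W]`, which also vanishes: on the identity columns because
`∑ g_i = 0`, on the columns of `A_i ∖ B` by assumption, and on those of `B` because `S W` is zero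
there. So every `g_i S` is zero, and since `S` has independent rows, so is `g`.
-/

open Matrix

/-- The block matrix `𝒢_{A_1,…,A_ℓ}[V]`. -/
def Gmat {F : Type} [Field F] {k n ℓ : ℕ} (V : Matrix (Fin k) (Fin n) F)
    (A : Fin ℓ → Finset (Fin n)) :
    Matrix (Fin ℓ × Fin k) (Fin k ⊕ (Σ i : Fin ℓ, {x // x ∈ A i})) F :=
  Matrix.of fun p c =>
    match c with
    | Sum.inl c => if p.2 = c then (1 : F) else 0
    | Sum.inr q => if p.1 = q.1 then V p.2 q.2.1 else 0

theorem Matrix.linearIndependent_row_iff_rank_eq_card {K m n : Type*} [Field K] [Fintype m]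
    [Fintype n] {M : Matrix m n K} : LinearIndependent K M.row ↔ M.rank = Fintype.card m := by
  rw [linearIndependent_iff_card_eq_finrank_span, M.rank_eq_finrank_span_row, Set.finrank,
    eq_comm]

theorem Matrix.linearIndependent_row_iff_vecMul_eq_zero {R m n : Type*} [CommRing R] [Fintype m]
    {M : Matrix m n R} : LinearIndependent R M.row ↔ ∀ v, v ᵥ* M = 0 → v = 0 := by
  rw [← vecMul_injective_iff, ← coe_vecMulLinear, injective_iff_map_eq_zero]
  rfl

theorem exists_linearIndependent_row_mul_eq_zero_on {F ι : Type*} [Field F] {k r : ℕ}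
    (W : Matrix (Fin r) ι F) (B : Finset ι) (h : k + B.card ≤ r) :
    ∃ S : Matrix (Fin k) (Fin r) F, LinearIndependent F S.row ∧ ∀ p, ∀ x ∈ B, (S * W) p x = 0 := by
  let L := (W.submatrix id ((↑) : B → ι)).vecMulLinear
  have hker : k ≤ Module.finrank F (LinearMap.ker L) := by
    have hrange : Module.finrank F (LinearMap.range L) ≤ B.card := by
      simpa using (LinearMap.range L).finrank_le
    have := L.finrank_range_add_finrank_ker
    simp only [Module.finrank_fin_fun] at this
    omega
  obtain ⟨s, hs⟩ := exists_linearIndependent_of_le_finrank hker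
  refine ⟨.of fun p => s p, hs.map' _ (LinearMap.ker L).ker_subtype, fun p x hx => ?_⟩
  have hsp : (s p : Fin r → F) ᵥ* W.submatrix id ((↑) : B → ι) = 0 := (s p).2
  simpa [Matrix.mul_apply, vecMul, dotProduct] using congrFun hsp ⟨x, hx⟩

section Gmat

variable {F : Type} [Field F] {k n ℓ : ℕ} (V : Matrix (Fin k) (Fin n) F)
    (A : Fin ℓ → Finset (Fin n)) (g : Fin ℓ × Fin k → F)

@[simp]
theorem vecMul_Gmat_inl (p : Fin k) : (g ᵥ* Gmat V A) (.inl p) = ∑ i, g (i, p) := by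
  simp [Gmat, vecMul, dotProduct, Fintype.sum_prod_type]

@[simp]
theorem vecMul_Gmat_inr (i : Fin ℓ) (x : A i) :
    (g ᵥ* Gmat V A) (.inr ⟨i, x⟩) = (Function.curry g i ᵥ* V) x := by
  simp [Gmat, vecMul, dotProduct, Fintype.sum_prod_type]

theorem vecMul_Gmat_eq_zero_iff :
    g ᵥ* Gmat V A = 0 ↔
      ∑ i, Function.curry g i = 0 ∧ ∀ i, ∀ x ∈ A i, (Function.curry g i ᵥ* V) x = 0 := by
  simp [funext_iff, Sum.forall, Sigma.forall, Finset.sum_apply]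

end Gmat

theorem linearIndependent_row_Gmat_mul_sdiff {F : Type} [Field F] {k r n ℓ : ℕ}
    {W : Matrix (Fin r) (Fin n) F} {A : Fin ℓ → Finset (Fin n)} {B : Finset (Fin n)}
    {S : Matrix (Fin k) (Fin r) F} (hW : LinearIndependent F (Gmat W A).row)
    (hS : LinearIndependent F S.row) (hSW : ∀ p, ∀ x ∈ B, (S * W) p x = 0) :
    LinearIndependent F (Gmat (S * W) (fun i => A i \ B)).row := by
  rw [linearIndependent_row_iff_vecMul_eq_zero] at hW hS ⊢
  intro g hg
  obtain ⟨hsum, hblock⟩ := (vecMul_Gmat_eq_zero_iff _ _ g).mp hg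
  let h : Fin ℓ × Fin r → F := Function.uncurry fun i => Function.curry g i ᵥ* S
  have hh : h ᵥ* Gmat W A = 0 := by
    refine (vecMul_Gmat_eq_zero_iff _ _ h).mpr ⟨?_, fun i x hx => ?_⟩
    · simp only [h, Function.curry_uncurry, ← Matrix.sum_vecMul, hsum, zero_vecMul]
    · simp only [h, Function.curry_uncurry, vecMul_vecMul]
      by_cases hxB : x ∈ B
      · simp [vecMul, dotProduct, hSW _ x hxB]
      · exact hblock i x (Finset.mem_sdiff.mpr ⟨hx, hxB⟩)
  have hg_curry : ∀ i, Function.curry g i = 0 := fun i =>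
    hS _ (funext fun q => congrFun (hW h hh) (i, q))
  funext ⟨i, p⟩
  exact congrFun (hg_curry i) p

theorem saturation_of_delete_general {F : Type} [Field F] {k n d m : ℕ}
    (A : Fin m → Finset (Fin n))
    (hsat : ∃ W : Matrix (Fin (k + d)) (Fin n) F, (Gmat W A).rank = m * (k + d))
    (B : Finset (Fin n)) (hB : B.card ≤ d) :
    ∃ W' : Matrix (Fin k) (Fin n) F, (Gmat W' (fun i => A i \ B)).rank = m * k := by
  obtain ⟨W, hW⟩ := hsat
  have hWrows : LinearIndependent F (Gmat W A).row :=
    linearIndependent_row_iff_rank_eq_card.mpr (by simp [hW])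
  obtain ⟨S, hS, hSW⟩ :=
    exists_linearIndependent_row_mul_eq_zero_on (k := k) W B (by omega)
  refine ⟨S * W, ?_⟩
  rw [(linearIndependent_row_Gmat_mul_sdiff hWrows hS hSW).rank_matrix]
  simp

/-- If `A_1,…,A_m` have the `(k+d)`-dimensional saturation property (a generic, equivalently
over an infinite field some, `(k+d) × n` matrix `W` makes `𝒢_{A_1,…,A_m}[W]` have full row
rank `m(k+d)`), then for any `B ⊆ [n]` with `|B| ≤ d`, the sets `A_1∖B,…,A_m∖B` have the
`k`-dimensional saturation property. -/
theorem saturation_of_delete {F : Type} [Field F] [Infinite F] {k n d m : ℕ}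
    (hk : k ≤ n) (hd : d ≤ n - k)
    (A : Fin m → Finset (Fin n))
    (hsat : ∃ W : Matrix (Fin (k + d)) (Fin n) F, (Gmat W A).rank = m * (k + d))
    (B : Finset (Fin n)) (hB : B.card ≤ d) :
    ∃ W' : Matrix (Fin k) (Fin n) F, (Gmat W' (fun i => A i \ B)).rank = m * k :=
  saturation_of_delete_general A hsat B hB
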